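/- Let G be a finite p-group with elementary abelian derived subgroup D(G) ≅ (ℤ/pℤ)^n equal to its Frattini subgroup, G/D(G) ≅ (ℤ/pℤ)^v, and suppose the conjugation representation on D(G) is lower unitriangular in some basis with all subdiagonal linear forms ℓ_{i+1,i} nonzero. Then n ≤ p. -/

import Mathlib

open Finset

/-- Entries of powers of a strictly lower triangular matrix vanish above the `k`-th
subdiagonal. -/
theorem strictLower_pow_eq_zero {n : ℕ} {R : Type*} [CommRing R]
    (N : Matrix (Fin n) (Fin n) R)
    (hN : ∀ a b : Fin n, (a : ℕ) ≤ (b : ℕ) → N a b = 0) :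
    ∀ (k : ℕ) (a b : Fin n), (a : ℕ) < (b : ℕ) + k → (N ^ k) a b = 0 := by
  intro k
  induction k with
  | zero =>
    intro a b h
    rw [pow_zero]
    exact Matrix.one_apply_ne (Fin.ne_of_val_ne (by omega))
  | succ k ih =>
    intro a b h
    rw [pow_succ, Matrix.mul_apply]
    apply Finset.sum_eq_zero
    intro l _
    by_cases hl : (l : ℕ) ≤ (b : ℕ)
    · rw [hN l b hl, mul_zero]
    · rw [ih a l (by omega), zero_mul]

/-- The `k`-th subdiagonal entry of the `k`-th power of a strictly lower triangular
matrix is the product of first-subdiagonal entries along the chain. -/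
theorem strictLower_pow_entry {n : ℕ} {R : Type*} [CommRing R]
    (N : Matrix (Fin n) (Fin n) R)
    (hN : ∀ a b : Fin n, (a : ℕ) ≤ (b : ℕ) → N a b = 0) :
    ∀ (k b : ℕ) (h : b + k < n),
      (N ^ k) ⟨b + k, h⟩ ⟨b, by omega⟩ =
        ∏ m : Fin k, N ⟨b + (m : ℕ) + 1, by have := m.isLt; omega⟩
          ⟨b + (m : ℕ), by have := m.isLt; omega⟩ := by
  intro k
  induction k with
  | zero =>
    intro b h
    rw [pow_zero]
    simp [Matrix.one_apply]
  | succ k ih =>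
    intro b h
    rw [pow_succ', Matrix.mul_apply]
    rw [Finset.sum_eq_single (⟨b + k, by omega⟩ : Fin n)]
    · rw [Fin.prod_univ_castSucc]
      simp only [Fin.coe_castSucc, Fin.val_last]
      rw [← ih b (by omega), mul_comm]
      rfl
    · intro l _ hne
      have hv : (l : ℕ) ≠ b + k := fun e => hne (Fin.ext e)
      rcases Nat.lt_or_ge (l : ℕ) (b + k) with hl | hl
      · rw [strictLower_pow_eq_zero N hN k l ⟨b, by omega⟩ (by simpa using hl), mul_zero]
      · rw [hN ⟨b + (k+1), h⟩ l (by simp; omega), zero_mul]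
    · intro hb; exact absurd (Finset.mem_univ _) hb

/-- If `p` additive characters `G → ZMod p` are each nonzero but their product
vanishes identically, we get a contradiction by counting. -/
theorem cover_contra {p : ℕ} [Fact p.Prime] {G : Type*} [Group G] [Finite G]
    (L : Fin p → G → ZMod p)
    (hadd : ∀ (i : Fin p) (g h : G), L i (g * h) = L i g + L i h)
    (hnz : ∀ i : Fin p, ∃ g : G, L i g ≠ 0)
    (hzero : ∀ g : G, ∃ i : Fin p, L i g = 0) : False := by
  classical
  cases nonempty_fintype G
  have hp2 : 2 ≤ p := (Fact.out : p.Prime).two_le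
  haveI : NeZero p := ⟨by omega⟩
  have hL1 : ∀ i, L i 1 = 0 := by
    intro i
    have h := hadd i 1 1
    rw [one_mul] at h
    exact right_eq_add.mp h
  let F : Fin p → (G →* Multiplicative (ZMod p)) := fun i =>
    MonoidHom.mk' (fun g => Multiplicative.ofAdd (L i g))
      (fun a b => by
        show Multiplicative.ofAdd (L i (a * b)) =
          Multiplicative.ofAdd (L i a) * Multiplicative.ofAdd (L i b)
        rw [hadd]; exact ofAdd_add _ _)
  have hsurj : ∀ i, Function.Surjective (F i) := by
    intro i c
    obtain ⟨g, hg⟩ := hnz i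
    refine ⟨g ^ ((Multiplicative.toAdd c) * (L i g)⁻¹).val, ?_⟩
    apply Multiplicative.toAdd.injective
    rw [map_pow, toAdd_pow]
    show (((Multiplicative.toAdd c) * (L i g)⁻¹).val : ℕ) • (L i g) = Multiplicative.toAdd c
    rw [nsmul_eq_mul, ZMod.natCast_val, ZMod.cast_id]
    exact inv_mul_cancel_right₀ hg _
  let K : Fin p → Finset G := fun i => univ.filter (fun g => L i g = 0)
  have hcard : ∀ i, p * (K i).card = Fintype.card G := by
    intro i
    have h1 : Nat.card G = Nat.card (G ⧸ (F i).ker) * Nat.card (F i).ker :=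
      Subgroup.card_eq_card_quotient_mul_card_subgroup _
    have h2 : Nat.card (G ⧸ (F i).ker) = p := by
      rw [Nat.card_congr (QuotientGroup.quotientKerEquivOfSurjective (F i) (hsurj i)).toEquiv]
      rw [Nat.card_congr (Multiplicative.toAdd (α := ZMod p))]
      exact Nat.card_zmod p
    have h3 : Nat.card (F i).ker = (K i).card := by
      rw [Nat.card_eq_fintype_card, Fintype.card_subtype]
      congr 1
      ext g
      simp [K, F, MonoidHom.mem_ker, MonoidHom.mk'_apply, ofAdd_eq_one]
    rw [h2, h3, Nat.card_eq_fintype_card] at h1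
    exact h1.symm
  have hc1 : ∀ i, (1 : G) ∈ K i := by
    intro i; simp [K, hL1 i]
  have hsub : (univ : Finset G) ⊆ insert 1 (univ.biUnion fun i => K i \ {1}) := by
    intro g _
    by_cases hg1 : g = 1
    · subst hg1; exact mem_insert_self _ _
    · obtain ⟨i, hi⟩ := hzero g
      exact mem_insert_of_mem (mem_biUnion.mpr ⟨i, mem_univ _,
        by simp [K, hi, hg1]⟩)
  have hcards : Fintype.card G ≤ 1 + ∑ i : Fin p, ((K i).card - 1) := by
    calc Fintype.card G = (univ : Finset G).card := (Finset.card_univ).symm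
      _ ≤ (insert 1 (univ.biUnion fun i => K i \ {1})).card := Finset.card_le_card hsub
      _ ≤ (univ.biUnion fun i => K i \ {1}).card + 1 := Finset.card_insert_le _ _
      _ ≤ (∑ i : Fin p, (K i \ {1}).card) + 1 := by
            exact Nat.add_le_add_right (Finset.card_biUnion_le) 1
      _ = 1 + ∑ i : Fin p, ((K i).card - 1) := by
            rw [Nat.add_comm]
            congr 1
            apply Finset.sum_congr rfl
            intro i _
            rw [Finset.card_sdiff_of_subset (by simp [hc1 i]), Finset.card_singleton]
  have i0 : Fin p := ⟨0, by omega⟩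
  have hsame : ∀ i, (K i).card = (K i0).card := fun i =>
    Nat.eq_of_mul_eq_mul_left (show 0 < p by omega) ((hcard i).trans (hcard i0).symm)
  obtain ⟨e, he⟩ : ∃ e, (K i0).card = e + 1 :=
    ⟨(K i0).card - 1, by have := Finset.card_pos.mpr ⟨(1 : G), hc1 i0⟩; omega⟩
  have hsum : ∑ i : Fin p, ((K i).card - 1) = p * e := by
    rw [Finset.sum_congr rfl fun i _ => by rw [hsame i, he, Nat.add_sub_cancel]]
    simp [Finset.sum_const, Finset.card_univ, mul_comm]
  have hGc : Fintype.card G = p * (e + 1) := by rw [← hcard i0, he]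
  rw [hGc, hsum, Nat.mul_succ] at hcards
  generalize p * e = B at hcards
  omega

/-- Let `G` be a finite `p`-group with elementary abelian derived subgroup
`D(G) ≅ (ℤ/pℤ)^n` equal to its Frattini subgroup, `G/D(G) ≅ (ℤ/pℤ)^v`, and suppose
the conjugation representation of `G/D(G)` on `D(G)` is lower unitriangular in some
basis with all subdiagonal linear forms `ℓ_{i+1,i}` nonzero. Then `n ≤ p`. -/
theorem rank_le_p_of_full_jumps
    {p n v : ℕ} [Fact p.Prime] (hn : 2 ≤ n)
    {G : Type*} [Group G] [Finite G] (hG : IsPGroup p G)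
    (hfr : commutator G = frattini G)
    (ι : (commutator G) ≃* Multiplicative (Fin n → ZMod p))
    (ιQ : (G ⧸ commutator G) ≃* Multiplicative (Fin v → ZMod p))
    (Φ : G → Matrix (Fin n) (Fin n) (ZMod p))
    (hmul : ∀ g h : G, Φ (g * h) = Φ g * Φ h)
    (hker : ∀ x ∈ commutator G, Φ x = 1)
    (hdiag : ∀ (g : G) (i : Fin n), Φ g i i = 1)
    (htri : ∀ (g : G) (i j : Fin n), (i : ℕ) < (j : ℕ) → Φ g i j = 0)
    (hconj : ∀ (g : G) (x y : commutator G), (y : G) = g⁻¹ * (x : G) * g →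
      Multiplicative.toAdd (ι y) = (Φ g).mulVec (Multiplicative.toAdd (ι x)))
    (hnz : ∀ i : ℕ, (hi : i + 1 < n) → ∃ g : G, Φ g ⟨i + 1, hi⟩ ⟨i, by omega⟩ ≠ 0) :
    n ≤ p := by
  by_contra hcon
  push_neg at hcon
  classical
  haveI : Nonempty (Fin n) := ⟨⟨0, by omega⟩⟩
  -- `Φ` sends powers to powers
  have h1 : Φ 1 = 1 := hker 1 (one_mem _)
  have hΦpow : ∀ (g : G) (k : ℕ), Φ (g ^ k) = Φ g ^ k := by
    intro g k
    induction k with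
    | zero => simpa using h1
    | succ k ih => rw [pow_succ, pow_succ, hmul, ih]
  -- every `p`-th power lies in the commutator subgroup
  have hexp : ∀ g : G, g ^ p ∈ commutator G := by
    intro g
    have hq : (QuotientGroup.mk g : G ⧸ commutator G) ^ p = 1 := by
      apply ιQ.injective
      rw [map_pow, map_one]
      apply Multiplicative.toAdd.injective
      rw [toAdd_pow, toAdd_one]
      funext j
      simp [nsmul_eq_mul, ZMod.natCast_self]
    rw [← QuotientGroup.eq_one_iff]
    rw [show (QuotientGroup.mk (g ^ p) : G ⧸ commutator G)
        = (QuotientGroup.mk g : G ⧸ commutator G) ^ p from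
      map_pow (QuotientGroup.mk' (commutator G)) g p]
    exact hq
  have hpow1 : ∀ g : G, Φ g ^ p = 1 := by
    intro g
    rw [← hΦpow g p]
    exact hker _ (hexp g)
  -- product of the subdiagonal entries vanishes
  have hzero : ∀ g : G, ∃ i : Fin p,
      Φ g ⟨(i : ℕ) + 1, by have := i.isLt; omega⟩ ⟨(i : ℕ), by have := i.isLt; omega⟩ = 0 := by
    intro g
    have hN : ∀ a b : Fin n, (a : ℕ) ≤ (b : ℕ) → (Φ g - 1) a b = 0 := by
      intro a b hab
      rcases eq_or_lt_of_le hab with he | hl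
      · have hab' : a = b := Fin.ext he
        subst hab'
        simp [Matrix.sub_apply, hdiag g a, Matrix.one_apply_eq]
      · rw [Matrix.sub_apply, htri g a b hl,
          Matrix.one_apply_ne (Fin.ne_of_val_ne (by omega)), sub_zero]
    have hNp : (Φ g - 1) ^ p = 0 := by
      rw [sub_pow_char_of_commute p (Commute.one_right (Φ g)), hpow1 g, one_pow, sub_self]
    have h0 : (0 : Matrix (Fin n) (Fin n) (ZMod p)) ⟨0 + p, by omega⟩ ⟨0, by omega⟩ =
        ∏ m : Fin p, (Φ g - 1) ⟨0 + (m : ℕ) + 1, by have := m.isLt; omega⟩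
          ⟨0 + (m : ℕ), by have := m.isLt; omega⟩ := by
      rw [← hNp]
      exact strictLower_pow_entry (Φ g - 1) hN p 0 (by omega)
    have h0' : (∏ m : Fin p, (Φ g - 1) ⟨0 + (m : ℕ) + 1, by have := m.isLt; omega⟩
        ⟨0 + (m : ℕ), by have := m.isLt; omega⟩) = 0 := by
      rw [← h0, Matrix.zero_apply]
    obtain ⟨m, -, hm⟩ := Finset.prod_eq_zero_iff.mp h0'
    have hmlt := m.isLt
    refine ⟨m, ?_⟩
    have e1 : (⟨0 + (m : ℕ) + 1, by omega⟩ : Fin n) = ⟨(m : ℕ) + 1, by omega⟩ :=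
      Fin.ext (by simp)
    have e2 : (⟨0 + (m : ℕ), by omega⟩ : Fin n) = ⟨(m : ℕ), by omega⟩ :=
      Fin.ext (by simp)
    rw [e1, e2] at hm
    rwa [Matrix.sub_apply, Matrix.one_apply_ne (Fin.ne_of_val_ne (by simp)),
      sub_zero] at hm
  -- the subdiagonal entries are additive characters
  have hadd : ∀ (i : Fin p) (g h : G),
      Φ (g * h) ⟨(i : ℕ) + 1, by have := i.isLt; omega⟩ ⟨(i : ℕ), by have := i.isLt; omega⟩ =
      Φ g ⟨(i : ℕ) + 1, by have := i.isLt; omega⟩ ⟨(i : ℕ), by have := i.isLt; omega⟩ +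
      Φ h ⟨(i : ℕ) + 1, by have := i.isLt; omega⟩ ⟨(i : ℕ), by have := i.isLt; omega⟩ := by
    intro i g h
    have hilt := i.isLt
    rw [hmul, Matrix.mul_apply]
    have hterm : ∀ k : Fin n,
        Φ g ⟨(i : ℕ) + 1, by omega⟩ k * Φ h k ⟨(i : ℕ), by omega⟩ =
        (if k = (⟨(i : ℕ), by omega⟩ : Fin n) then
          Φ g ⟨(i : ℕ) + 1, by omega⟩ ⟨(i : ℕ), by omega⟩ else 0) +
        (if k = (⟨(i : ℕ) + 1, by omega⟩ : Fin n) then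
          Φ h ⟨(i : ℕ) + 1, by omega⟩ ⟨(i : ℕ), by omega⟩ else 0) := by
      intro k
      by_cases hk1 : k = (⟨(i : ℕ), by omega⟩ : Fin n)
      · subst hk1
        rw [if_pos rfl, if_neg (Fin.ne_of_val_ne (by simp)), add_zero, hdiag, mul_one]
      · by_cases hk2 : k = (⟨(i : ℕ) + 1, by omega⟩ : Fin n)
        · subst hk2
          rw [if_neg hk1, if_pos rfl, zero_add, hdiag, one_mul]
        · rw [if_neg hk1, if_neg hk2, add_zero]
          have hv1 : (k : ℕ) ≠ (i : ℕ) := fun e => hk1 (Fin.ext e)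
          have hv2 : (k : ℕ) ≠ (i : ℕ) + 1 := fun e => hk2 (Fin.ext e)
          rcases Nat.lt_or_ge (k : ℕ) ((i : ℕ) + 1) with hk | hk
          · rw [htri h k ⟨(i : ℕ), by omega⟩ (by simpa using by omega : (k : ℕ) < (i : ℕ)),
              mul_zero]
          · rw [htri g ⟨(i : ℕ) + 1, by omega⟩ k (by simpa using by omega), zero_mul]
    rw [Finset.sum_congr rfl fun k _ => hterm k, Finset.sum_add_distrib,
      Finset.sum_ite_eq' Finset.univ, Finset.sum_ite_eq' Finset.univ]
    simp
  have hnzL : ∀ i : Fin p, ∃ g : G,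
      Φ g ⟨(i : ℕ) + 1, by have := i.isLt; omega⟩ ⟨(i : ℕ), by have := i.isLt; omega⟩ ≠ 0 := by
    intro i
    have hilt := i.isLt
    exact hnz (i : ℕ) (by omega)
  exact cover_contra
    (fun (i : Fin p) (g : G) =>
      Φ g ⟨(i : ℕ) + 1, by have := i.isLt; omega⟩ ⟨(i : ℕ), by have := i.isLt; omega⟩)
    hadd hnzL hzero
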